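/- arXiv:1408.0235 — 4 statements merged into one kernel-verified Lean document; each statement's English description precedes it below -/
import Mathlib

section
/- For every positive integer n, the set of odd primes p with χ_p(n) = -1 is finite if and only if n is a perfect square; that is, a positive integer is a quadratic residue of all but finitely many primes if and only if it is a square. -/
/-!
Write `n = m² k` with `k` squarefree. If `n` is not a square then `k ≠ 1`, and the Chinese
remainder theorem with quadratic reciprocity gives an odd `b` with `J(k | b) = -1`. On odd
arguments `J(k | ·)` has period `4k`, so every prime `p ≡ b mod 4k` not dividing `m` has
`χ_p(n) = χ_p(k) = -1`, and Dirichlet's theorem supplies infinitely many such `p`.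
Conversely `χ_p(r²) = χ_p(r)² ≥ 0`.
-/

open scoped NumberTheorySymbols

theorem jacobiSym_eq_one_of_modEq_one {a b : ℕ} (hb : b ≡ 1 [MOD 4 * a]) : J(a | b) = 1 := by
  have hodd : Odd b := Nat.odd_iff.mpr ((hb.of_mul_right a).of_dvd (by norm_num : 2 ∣ 4))
  rw [jacobiSym.mod_right' a hodd, hb]
  rcases eq_or_ne a 0 with rfl | ha
  · simp [jacobiSym.one_right]
  · rw [Nat.one_mod_eq_one.mpr (by omega), jacobiSym.one_right]

theorem Odd.coprime_four_mul_of_jacobiSym_ne_zero {a b : ℕ} (hb : Odd b) (h : J(a | b) ≠ 0) :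
    b.Coprime (4 * a) := by
  have hgcd : Int.gcd a b = 1 := by
    by_contra hne
    exact h (jacobiSym.eq_zero_iff.mpr ⟨hb.pos.ne', hne⟩)
  refine Nat.Coprime.mul_right ?_ (Nat.Coprime.symm (by simpa using hgcd))
  exact Nat.Coprime.pow_right 2 (Nat.coprime_two_right.mpr hb)

theorem exists_odd_jacobiSym_prime_mul_eq_neg_one {q t : ℕ} (hq : q.Prime) (hq2 : q ≠ 2)
    (hqt : q.Coprime t) : ∃ b, Odd b ∧ J((q * t : ℕ) | b) = -1 := by
  -- `b ≡ 1 mod 4t` makes `J(t | b) = 1`, and by reciprocity (`b ≡ 1 mod 4`)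
  -- `J(q | b) = J(b | q)`, which is `-1` once `b` is a nonresidue mod `q`.
  have : Fact q.Prime := ⟨hq⟩
  have hq_odd : Odd q := hq.odd_of_ne_two hq2
  obtain ⟨c, hc⟩ := FiniteField.exists_nonsquare (F := ZMod q) (by rwa [ZMod.ringChar_zmod_n])
  have hco : (4 * t).Coprime q :=
    Nat.Coprime.mul_left (Nat.Coprime.pow_left 2 (Nat.coprime_two_left.mpr hq_odd)) hqt.symm
  obtain ⟨b, hbt, hbc⟩ := Nat.chineseRemainder hco 1 c.val
  have hb4 : b % 4 = 1 := hbt.of_mul_right t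
  have hbq : (b : ZMod q) = c := by
    rw [(ZMod.natCast_eq_natCast_iff _ _ _).mpr hbc, ZMod.natCast_zmod_val]
  refine ⟨b, Nat.odd_iff.mpr (by omega), ?_⟩
  rw [Nat.cast_mul, jacobiSym.mul_left, jacobiSym_eq_one_of_modEq_one hbt, mul_one,
    jacobiSym.quadratic_reciprocity_one_mod_four' hq_odd hb4,
    ← jacobiSym.legendreSym.to_jacobiSym, legendreSym.eq_neg_one_iff', hbq]
  exact hc

theorem Squarefree.eq_two_of_forall_prime_dvd_eq_two {k : ℕ} (hk : Squarefree k) (hk1 : k ≠ 1)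
    (h : ∀ q, q.Prime → q ∣ k → q = 2) : k = 2 := by
  have hsub : k.primeFactors ⊆ {2} := fun q hq =>
    Finset.mem_singleton.mpr
      (h q (Nat.prime_of_mem_primeFactors hq) (Nat.dvd_of_mem_primeFactors hq))
  rw [← Nat.prod_primeFactors_of_squarefree hk] at hk1 ⊢
  rcases Finset.subset_singleton_iff.mp hsub with h0 | h2 <;> simp_all

theorem exists_odd_jacobiSym_eq_neg_one {k : ℕ} (hk : Squarefree k) (hk1 : k ≠ 1) :
    ∃ b, Odd b ∧ J(k | b) = -1 := by
  by_cases h : ∃ q, q.Prime ∧ q ∣ k ∧ q ≠ 2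
  · obtain ⟨q, hq, ⟨t, rfl⟩, hq2⟩ := h
    exact exists_odd_jacobiSym_prime_mul_eq_neg_one hq hq2 (Nat.squarefree_mul_iff.mp hk).1
  · push Not at h
    rw [hk.eq_two_of_forall_prime_dvd_eq_two hk1 h]
    exact ⟨3, by decide, by rw [Nat.cast_ofNat, jacobiSym.at_two (by decide)]; decide⟩

theorem legendreSym_sq_mul (p : ℕ) [Fact p.Prime] {m : ℤ} (hm : (m : ZMod p) ≠ 0) (k : ℤ) :
    legendreSym p (m ^ 2 * k) = legendreSym p k := by
  rw [legendreSym.mul, legendreSym.sq_one' p hm, one_mul]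

theorem infinite_setOf_legendreSym_eq_neg_one {n : ℕ} (hn : ¬IsSquare n) :
    {p : ℕ | ∃ hp : Fact p.Prime, p ≠ 2 ∧ @legendreSym p hp n = -1}.Infinite := by
  obtain ⟨k, m, rfl, hk⟩ := Nat.sq_mul_squarefree n
  have hm : 0 < m := Nat.pos_of_ne_zero (by rintro rfl; exact hn ⟨0, by simp⟩)
  have hk1 : k ≠ 1 := by rintro rfl; exact hn ⟨m, by ring⟩
  obtain ⟨b, hb, hJ⟩ := exists_odd_jacobiSym_eq_neg_one hk hk1
  have : NeZero (4 * k) := ⟨by simp [hk.ne_zero]⟩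
  have hbu : IsUnit (b : ZMod (4 * k)) :=
    (ZMod.isUnit_iff_coprime b (4 * k)).mpr
      (hb.coprime_four_mul_of_jacobiSym_ne_zero (by rw [hJ]; decide))
  refine ((Nat.infinite_setOfPred_prime_and_eq_mod hbu).sdiff (Set.finite_le_nat m)).mono ?_
  rintro p ⟨⟨hp, hpb⟩, hpm : ¬p ≤ m⟩
  have : Fact p.Prime := ⟨hp⟩
  rw [ZMod.natCast_eq_natCast_iff' p b (4 * k)] at hpb
  have hp_odd : Odd p := Nat.odd_iff.mpr <|
    (Nat.odd_iff.mp hb) ▸ Nat.ModEq.of_dvd (Dvd.intro (2 * k) (by ring)) hpb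
  have hmp : ((m : ℤ) : ZMod p) ≠ 0 := by
    rw [Int.cast_natCast, Ne, ZMod.natCast_eq_zero_iff]
    exact Nat.not_dvd_of_pos_of_lt hm (not_le.mp hpm)
  refine ⟨this, hp_odd.ne_two_of_dvd_nat dvd_rfl, ?_⟩
  rw [Nat.cast_mul, Nat.cast_pow, legendreSym_sq_mul p hmp, jacobiSym.legendreSym.to_jacobiSym,
    jacobiSym.mod_right' k hp_odd, hpb, ← jacobiSym.mod_right' k hb, hJ]

theorem legendreSym_ne_neg_one_of_isSquare (p : ℕ) [Fact p.Prime] {a : ℤ} (ha : IsSquare a) :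
    legendreSym p a ≠ -1 := by
  obtain ⟨r, rfl⟩ := ha
  rw [legendreSym.mul]
  linarith [mul_self_nonneg (legendreSym p r)]

theorem finite_setOf_legendreSym_eq_neg_one_iff_isSquare_general (n : ℕ) :
    {p : ℕ | ∃ hp : Fact p.Prime, p ≠ 2 ∧ @legendreSym p hp (n : ℤ) = -1}.Finite ↔ IsSquare n := by
  refine ⟨fun hfin => by_contra fun hn => infinite_setOf_legendreSym_eq_neg_one hn hfin,
    fun hn => ?_⟩
  refine Set.finite_empty.subset fun p ⟨_, _, hleg⟩ => ?_
  exact legendreSym_ne_neg_one_of_isSquare p (hn.map (Nat.castRingHom ℤ)) hleg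

/-- A positive integer is a quadratic residue of all but finitely many primes if and only if
it is a perfect square: the set of odd primes `p` with `χ_p(n) = -1` is finite iff `n` is a
square. -/
theorem finite_setOf_legendreSym_eq_neg_one_iff_isSquare (n : ℕ) (hn : 0 < n) :
    {p : ℕ | ∃ hp : Fact p.Prime, p ≠ 2 ∧ @legendreSym p hp (n : ℤ) = -1}.Finite ↔ IsSquare n :=
  finite_setOf_legendreSym_eq_neg_one_iff_isSquare_general n
end

section
/- For every nonempty finite set S of positive integers, the set of odd primes p such that χ_p(z) = 1 for every z ∈ S is infinite; i.e., every nonempty finite set of positive integers is a set of quadratic residues of infinitely many primes. -/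
/-! If `p ≡ 1 (mod 8 ∏ S)`, then `p ≡ 1 (mod 8)` makes `2` a square mod `p`, and for an odd
prime `q ∣ z ∈ S` quadratic reciprocity (valid as `p ≡ 1 (mod 4)`) gives
`(q / p) = (p / q) = (1 / q) = 1`. Multiplicativity then makes every `z ∈ S` a square mod `p`,
and Dirichlet's theorem in the elementary case `p ≡ 1 (mod k)` supplies infinitely many such
primes. -/

namespace legendreSym

variable {p : ℕ} [Fact p.Prime]

theorem prime_eq_one_of_modEq_one {q : ℕ} (hq : q.Prime) (h : p ≡ 1 [MOD 8 * q]) :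
    legendreSym p q = 1 := by
  have hp8 : p % 8 = 1 := h.of_mul_right q
  rcases eq_or_ne q 2 with rfl | hq2
  · rw [Nat.cast_ofNat, at_two (by omega), ZMod.χ₈_nat_mod_eight, hp8]
    rfl
  · have : Fact q.Prime := ⟨hq⟩
    have hpq : p % q = 1 % q := h.of_mul_left 8
    rw [Nat.mod_eq_of_lt hq.one_lt] at hpq
    rw [← quadratic_reciprocity_one_mod_four (by omega) hq2, legendreSym.mod, ← Int.natCast_mod,
      hpq, Nat.cast_one, at_one]

theorem natCast_eq_one_of_modEq_one (n : ℕ) (h : p ≡ 1 [MOD 8 * n]) : legendreSym p n = 1 := by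
  induction n using induction_on_primes with
  | zero => exact absurd (Nat.modEq_zero_iff.mp h) (Fact.out : p.Prime).ne_one
  | one => exact_mod_cast at_one p
  | prime_mul q a hq ih =>
    have hq' : p ≡ 1 [MOD 8 * q] := h.of_dvd (mul_dvd_mul_left 8 (dvd_mul_right q a))
    have ha : p ≡ 1 [MOD 8 * a] := h.of_dvd (mul_dvd_mul_left 8 (dvd_mul_left a q))
    rw [Nat.cast_mul, legendreSym.mul, prime_eq_one_of_modEq_one hq hq', ih ha, one_mul]

end legendreSym

theorem infinite_setOf_forall_legendreSym_eq_one_general (S : Finset ℕ)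
    (hpos : ∀ z ∈ S, 0 < z) :
    {p : ℕ | ∃ hp : Fact p.Prime, p ≠ 2 ∧ ∀ z ∈ S, @legendreSym p hp (z : ℤ) = 1}.Infinite := by
  have hN : 8 * ∏ z ∈ S, z ≠ 0 :=
    mul_ne_zero (by norm_num) (Finset.prod_ne_zero_iff.mpr fun z hz ↦ (hpos z hz).ne')
  refine (Nat.infinite_setOfPred_prime_modEq_one hN).mono ?_
  rintro p ⟨hp, hmod⟩
  have hp8 : p % 8 = 1 := hmod.of_mul_right _
  have : Fact p.Prime := ⟨hp⟩
  refine ⟨this, by omega, fun z hz ↦ ?_⟩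
  exact legendreSym.natCast_eq_one_of_modEq_one z
    (hmod.of_dvd (mul_dvd_mul_left 8 (Finset.dvd_prod_of_mem _ hz)))

/-- Every nonempty finite set of positive integers is a set of quadratic residues of infinitely
many primes. -/
theorem infinite_setOf_forall_legendreSym_eq_one (S : Finset ℕ) (hS : S.Nonempty)
    (hpos : ∀ z ∈ S, 0 < z) :
    {p : ℕ | ∃ hp : Fact p.Prime, p ≠ 2 ∧ ∀ z ∈ S, @legendreSym p hp (z : ℤ) = 1}.Infinite :=
  infinite_setOf_forall_legendreSym_eq_one_general S hpos
end

section
/- Let Π be a nonempty finite set of prime numbers and let ε : Π → {-1, 1} be any function. Then the set of odd primes p such that χ_p(q) = ε(q) for every q ∈ Π is infinite. -/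
/-!
For every odd `q ∈ T` pick a residue class modulo `q` on which `(· / q)` takes the value `ε q`,
and a class modulo `8` that is `1` modulo `4` and on which `(2 / ·)` takes the value `ε 2`.
By the Chinese remainder theorem these classes form a single unit class modulo `8 ∏ q`, which
contains infinitely many primes `p` by Dirichlet's theorem. Since `p ≡ 1 [MOD 4]`, quadratic
reciprocity gives `(q / p) = (p / q) = ε q`.
-/

open Function

theorem infinite_setOf_prime_and_forall_modEq {ι : Type*} {t : Finset ι} {s a : ι → ℕ}
    (hs : ∀ i ∈ t, s i ≠ 0) (hst : Set.Pairwise t (Nat.Coprime on s))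
    (ha : ∀ i ∈ t, (a i).Coprime (s i)) :
    {p : ℕ | p.Prime ∧ ∀ i ∈ t, p ≡ a i [MOD s i]}.Infinite := by
  obtain ⟨k, hk⟩ := Nat.chineseRemainderOfFinset a s t hs hst
  have : NeZero (∏ i ∈ t, s i) := ⟨Finset.prod_ne_zero_iff.2 hs⟩
  have hk_unit : IsUnit (k : ZMod (∏ i ∈ t, s i)) :=
    (ZMod.isUnit_iff_coprime _ _).2 <| Nat.Coprime.prod_right fun i hi =>
      ((hk i hi).gcd_eq.trans (ha i hi))
  refine (Nat.infinite_setOfPred_prime_and_eq_mod hk_unit).mono ?_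
  rintro p ⟨hp, hpk⟩
  have hpk : p ≡ k [MOD ∏ i ∈ t, s i] := (ZMod.natCast_eq_natCast_iff _ _ _).1 hpk
  exact ⟨hp, fun i hi => (hpk.of_dvd (Finset.dvd_prod_of_mem s hi)).trans (hk i hi)⟩

theorem infinite_setOf_prime_modEq_eight_and_forall_modEq {S : Finset ℕ}
    (hS : ∀ q ∈ S, q.Prime ∧ q ≠ 2) {r : ℕ} (hr : Odd r) {b : ℕ → ℕ}
    (hb : ∀ q ∈ S, (b q).Coprime q) :
    {p : ℕ | p.Prime ∧ p ≡ r [MOD 8] ∧ ∀ q ∈ S, p ≡ b q [MOD q]}.Infinite := by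
  have h8 : ∀ q ∈ S, Nat.Coprime 8 q := fun q hq =>
    Nat.Coprime.pow_left 3 <| (Nat.coprime_primes Nat.prime_two (hS q hq).1).2 (hS q hq).2.symm
  have hcop :
      Set.Pairwise (Finset.insertNone S) (Nat.Coprime on fun o : Option ℕ => o.elim 8 id) := by
    rintro (_ | q) hq (_ | q') hq' hne
    · exact absurd rfl hne
    · exact h8 q' (Finset.some_mem_insertNone.1 hq')
    · exact (h8 q (Finset.some_mem_insertNone.1 hq)).symm
    · exact (Nat.coprime_primes (hS q (Finset.some_mem_insertNone.1 hq)).1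
        (hS q' (Finset.some_mem_insertNone.1 hq')).1).2 fun h => hne (congrArg some h)
  refine (infinite_setOf_prime_and_forall_modEq (t := Finset.insertNone S)
    (a := fun o : Option ℕ => o.elim r b) ?_ hcop ?_).mono ?_
  · exact Finset.forall_mem_insertNone.2 ⟨by norm_num, fun q hq => (hS q hq).1.ne_zero⟩
  · exact Finset.forall_mem_insertNone.2
      ⟨Nat.Coprime.pow_right 3 (Nat.coprime_two_right.2 hr), hb⟩
  · rintro p ⟨hp, hpa⟩
    exact ⟨hp, Finset.forall_mem_insertNone.1 hpa⟩

theorem exists_mod_eight_forall_legendreSym_two_eq {e : ℤ} (he : e = 1 ∨ e = -1) :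
    ∃ r : ℕ, r ≡ 1 [MOD 4] ∧ ∀ p [Fact p.Prime], p ≡ r [MOD 8] → legendreSym p 2 = e := by
  rcases he with rfl | rfl <;>
    [refine ⟨1, rfl, fun p _ hp => ?_⟩; refine ⟨5, rfl, fun p _ hp => ?_⟩] <;>
  · unfold Nat.ModEq at hp
    rw [legendreSym.at_two (by omega), ZMod.χ₈_nat_eq_if_mod_eight]
    split_ifs <;> omega

theorem exists_natCast_legendreSym_eq (q : ℕ) [Fact q.Prime] (hq : q ≠ 2) {e : ℤ}
    (he : e = 1 ∨ e = -1) : ∃ a : ℕ, legendreSym q a = e := by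
  rcases he with rfl | rfl
  · exact ⟨1, by exact_mod_cast legendreSym.at_one q⟩
  · obtain ⟨a, ha⟩ := quadraticChar_exists_neg_one (F := ZMod q) (by rwa [ZMod.ringChar_zmod_n])
    exact ⟨a.val, by rwa [legendreSym, Int.cast_natCast, ZMod.natCast_zmod_val]⟩

theorem exists_coprime_forall_legendreSym_eq {q : ℕ} (hq : q.Prime) (hq2 : q ≠ 2) {e : ℤ}
    (he : e = 1 ∨ e = -1) :
    ∃ a : ℕ, a.Coprime q ∧
      ∀ p [Fact p.Prime], p % 4 = 1 → p ≡ a [MOD q] → legendreSym p q = e := by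
  have : Fact q.Prime := ⟨hq⟩
  obtain ⟨a, ha⟩ := exists_natCast_legendreSym_eq q hq2 he
  have ha0 : ((a : ℤ) : ZMod q) ≠ 0 := fun h => by
    have := (legendreSym.eq_zero_iff q a).2 h
    rcases he with rfl | rfl <;> omega
  refine ⟨a, (ZMod.isUnit_iff_coprime a q).1 (by exact_mod_cast ha0.isUnit), fun p _ hp4 hpa => ?_⟩
  rw [← legendreSym.quadratic_reciprocity_one_mod_four hp4 hq2, ← ha, legendreSym, legendreSym,
    Int.cast_natCast, Int.cast_natCast, (ZMod.natCast_eq_natCast_iff _ _ _).2 hpa]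

theorem infinite_setOf_legendreSym_pattern_on_primes_general (T : Finset ℕ)
    (hTprime : ∀ q ∈ T, q.Prime)
    (ε : ℕ → ℤ) (hε : ∀ q ∈ T, ε q = 1 ∨ ε q = -1) :
    {p : ℕ | ∃ hp : Fact p.Prime, p ≠ 2 ∧ ∀ q ∈ T, @legendreSym p hp (q : ℤ) = ε q}.Infinite := by
  obtain ⟨r, hr4, hr⟩ : ∃ r : ℕ, r ≡ 1 [MOD 4] ∧
      ∀ (p : ℕ) [Fact p.Prime], p ≡ r [MOD 8] → 2 ∈ T → legendreSym p 2 = ε 2 := by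
    by_cases h2 : 2 ∈ T
    · obtain ⟨r, hr4, hr⟩ := exists_mod_eight_forall_legendreSym_two_eq (hε 2 h2)
      exact ⟨r, hr4, fun p _ hp _ => hr p hp⟩
    · exact ⟨1, rfl, fun _ _ _ h => absurd h h2⟩
  choose! b hb_cop hb using fun q (hq : q ∈ T.erase 2) =>
    exists_coprime_forall_legendreSym_eq (hTprime q (Finset.mem_of_mem_erase hq))
      (Finset.ne_of_mem_erase hq) (hε q (Finset.mem_of_mem_erase hq))
  refine (infinite_setOf_prime_modEq_eight_and_forall_modEq (S := T.erase 2)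
    (fun q hq => ⟨hTprime q (Finset.mem_of_mem_erase hq), Finset.ne_of_mem_erase hq⟩)
    (Nat.odd_iff.2 (hr4.of_dvd (by norm_num : 2 ∣ 4))) hb_cop).mono ?_
  rintro p ⟨hp, hpr, hpb⟩
  have hfact : Fact p.Prime := ⟨hp⟩
  have hp4 : p % 4 = 1 := (hpr.of_dvd (by norm_num : 4 ∣ 8)).trans hr4
  refine ⟨hfact, by omega, fun q hq => ?_⟩
  rcases eq_or_ne q 2 with rfl | hq2
  · exact hr p hpr hq
  · exact hb q (Finset.mem_erase.2 ⟨hq2, hq⟩) p hp4 (hpb q (Finset.mem_erase.2 ⟨hq2, hq⟩))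

/-- Basic Lemma: given a nonempty finite set `T` of primes and a choice of signs `ε` on `T`,
there are infinitely many (odd) primes `p` with `χ_p(q) = ε(q)` for all `q ∈ T`. -/
theorem infinite_setOf_legendreSym_pattern_on_primes (T : Finset ℕ) (hT : T.Nonempty)
    (hTprime : ∀ q ∈ T, q.Prime)
    (ε : ℕ → ℤ) (hε : ∀ q ∈ T, ε q = 1 ∨ ε q = -1) :
    {p : ℕ | ∃ hp : Fact p.Prime, p ≠ 2 ∧ ∀ q ∈ T, @legendreSym p hp (q : ℤ) = ε q}.Infinite :=
  infinite_setOf_legendreSym_pattern_on_primes_general T hTprime ε hε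
end

section
/- Let S be a nonempty finite set of positive integers. The set of odd primes p such that χ_p(z) = -1 for every z ∈ S is infinite if and only if for every subset T of S of odd cardinality, the product ∏_{z ∈ T} z is not a perfect square. -/
/-!
If `∏ z ∈ T, z` is a square, multiplicativity of the Legendre symbol gives
`χ_p(∏ z ∈ T, z) = (-1) ^ #T`, so no prime makes every `χ_p(z) = -1` when `#T` is odd.

Conversely, record each `z` by its vector of prime exponents mod 2. No odd subfamily of these
vectors sums to zero exactly when `(1, 0)` lies outside the span of the vectors `(1, v z)`,
that is, when some linear form `e` takes the value `1` at every `v z`. Dirichlet's theorem,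
through the Chinese remainder theorem and quadratic reciprocity, yields infinitely many primes `p`
with `χ_p(q) = (-1) ^ e(q)` for every prime `q` dividing an element of `S`, and then
`χ_p(z) = (-1) ^ e(v z) = -1`.
-/

theorem legendreSym_natCast_prod (p : ℕ) [Fact p.Prime] {ι : Type*} (T : Finset ι) (f : ι → ℕ) :
    legendreSym p (∏ i ∈ T, f i : ℕ) = ∏ i ∈ T, legendreSym p (f i) := by
  rw [Nat.cast_prod]
  exact map_prod (legendreSym.hom p) _ T

theorem not_isSquare_prod_of_legendreSym_eq_neg_one (p : ℕ) [Fact p.Prime] {T : Finset ℕ}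
    (hT : Odd T.card) (h : ∀ z ∈ T, legendreSym p z = -1) : ¬IsSquare (∏ z ∈ T, z) := by
  have hprod : legendreSym p (∏ z ∈ T, z : ℕ) = -1 := by
    rw [legendreSym_natCast_prod, Finset.prod_congr rfl h, Finset.prod_const, hT.neg_one_pow]
  rw [legendreSym.eq_neg_one_iff'] at hprod
  exact fun hsq => hprod (hsq.map (Nat.castRingHom (ZMod p)))

theorem legendreSym_natCast_eq_prod_primeFactors (p : ℕ) [Fact p.Prime] {n : ℕ} (hn : n ≠ 0) :
    legendreSym p n = ∏ q ∈ n.primeFactors, legendreSym p q ^ n.factorization q := by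
  conv_lhs => rw [← Nat.prod_factorization_pow_eq_self hn]
  rw [Finsupp.prod, Nat.support_factorization, legendreSym_natCast_prod]
  push_cast
  exact Finset.prod_congr rfl fun q _ => map_pow (legendreSym.hom p) _ _

theorem exists_dual_forall_apply_eq_one {ι V : Type*} [AddCommGroup V] [Module (ZMod 2) V]
    (S : Finset ι) (w : ι → V) (h : ∀ T ⊆ S, Odd T.card → ∑ i ∈ T, w i ≠ 0) :
    ∃ f : Module.Dual (ZMod 2) V, ∀ i ∈ S, f (w i) = 1 := by
  classical
  have hsmul (c : ZMod 2) (x : ZMod 2 × V) : c • x = if c = 1 then x else 0 := by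
    obtain rfl | rfl : c = 0 ∨ c = 1 := by decide +revert
    all_goals simp
  let u : ι → ZMod 2 × V := fun i => (1, w i)
  have hnot : ((1 : ZMod 2), (0 : V)) ∉ Submodule.span (ZMod 2) (u '' S) := by
    rw [Submodule.mem_span_image_finset_iff_exists_fun']
    rintro ⟨c, hc⟩
    set T := S.filter (c · = 1)
    have hT : ∑ i ∈ T, u i = (1, 0) := by
      rw [← hc, Finset.sum_filter]
      exact Finset.sum_congr rfl fun i _ => (hsmul _ _).symm
    refine h T (Finset.filter_subset _ S) ?_ ?_
    · simpa [u, Prod.fst_sum, ZMod.natCast_eq_one_iff_odd] using congrArg Prod.fst hT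
    · simpa [u, Prod.snd_sum] using congrArg Prod.snd hT
  obtain ⟨g, hg1, hg⟩ := Submodule.exists_dual_map_eq_bot_of_notMem hnot inferInstance
  refine ⟨g ∘ₗ LinearMap.inr (ZMod 2) (ZMod 2) V, fun i hi => ?_⟩
  have hgu : g (u i) = 0 := by
    rw [← Submodule.mem_bot (ZMod 2), ← hg]
    exact Submodule.mem_map_of_mem (Submodule.subset_span ⟨i, hi, rfl⟩)
  have hsplit : u i = (1, 0) + (0, w i) := by simp [u]
  rw [hsplit, map_add] at hgu
  have hF₂ : ∀ x y : ZMod 2, x ≠ 0 → x + y = 0 → y = 1 := by decide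
  exact hF₂ _ _ hg1 hgu

namespace Nat

noncomputable def factorizationMod2 (n : ℕ) : ℕ →₀ ZMod 2 :=
  Finsupp.mapRange.addMonoidHom (Nat.castAddMonoidHom (ZMod 2)) n.factorization

theorem factorizationMod2_prod {ι : Type*} {T : Finset ι} {f : ι → ℕ} (hf : ∀ i ∈ T, f i ≠ 0) :
    factorizationMod2 (∏ i ∈ T, f i) = ∑ i ∈ T, factorizationMod2 (f i) := by
  rw [factorizationMod2, factorization_prod hf, map_sum]
  rfl

theorem isSquare_of_factorizationMod2_eq_zero {n : ℕ} (hn : n ≠ 0) (h : factorizationMod2 n = 0) :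
    IsSquare n := by
  refine ⟨n.factorization.prod fun q k => q ^ (k / 2), ?_⟩
  conv_lhs => rw [← Nat.prod_factorization_pow_eq_self hn]
  rw [Finsupp.prod, Finsupp.prod, ← Finset.prod_mul_distrib]
  refine Finset.prod_congr rfl fun q _ => ?_
  have heven : 2 ∣ n.factorization q := by
    rw [← ZMod.natCast_eq_zero_iff]
    exact DFunLike.congr_fun h q
  rw [← pow_add]
  congr 1
  omega

theorem dual_apply_factorizationMod2 (f : Module.Dual (ZMod 2) (ℕ →₀ ZMod 2)) (n : ℕ) :
    f (factorizationMod2 n) =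
      ∑ q ∈ n.primeFactors, (n.factorization q : ZMod 2) * f (Finsupp.single q 1) := by
  conv_lhs => rw [← Finsupp.sum_single (factorizationMod2 n)]
  rw [factorizationMod2, Finsupp.mapRange.addMonoidHom_apply, Finsupp.sum_mapRange_index
    (fun _ => Finsupp.single_zero _), map_finsuppSum, Finsupp.sum, Nat.support_factorization]
  refine Finset.sum_congr rfl fun q _ => ?_
  rw [← smul_eq_mul, ← map_smul, Finsupp.smul_single_one]
  rfl

end Nat

theorem legendreSym_natCast_eq_neg_one_pow (p : ℕ) [Fact p.Prime]
    (f : Module.Dual (ZMod 2) (ℕ →₀ ZMod 2)) {n : ℕ} (hn : n ≠ 0)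
    (h : ∀ q ∈ n.primeFactors, legendreSym p q = (-1) ^ (f (Finsupp.single q 1)).val) :
    legendreSym p n = (-1) ^ (f n.factorizationMod2).val := by
  rw [legendreSym_natCast_eq_prod_primeFactors p hn,
    Finset.prod_congr rfl fun q hq => by rw [h q hq, ← pow_mul], Finset.prod_pow_eq_pow_sum,
    Nat.dual_apply_factorizationMod2, neg_one_pow_eq_pow_mod_two, ← ZMod.val_natCast]
  push_cast
  simp only [ZMod.natCast_val, ZMod.cast_id', id, mul_comm]

theorem Nat.infinite_setOf_prime_and_forall_eq_mod {ι : Type*} [Fintype ι] {m : ι → ℕ}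
    [∀ i, NeZero (m i)] (hm : Pairwise (Function.onFun Nat.Coprime m)) {a : ∀ i, ZMod (m i)}
    (ha : ∀ i, IsUnit (a i)) : {p : ℕ | p.Prime ∧ ∀ i, (p : ZMod (m i)) = a i}.Infinite := by
  let E := ZMod.prodEquivPi m hm
  have : NeZero (∏ i, m i) := ⟨Finset.prod_ne_zero_iff.2 fun i _ => NeZero.ne _⟩
  refine (Nat.infinite_setOfPred_prime_and_eq_mod ((Pi.isUnit_iff.2 ha).map E.symm)).mono ?_
  rintro p ⟨hp, hpa⟩
  refine ⟨hp, fun i => ?_⟩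
  have hEp := congrArg E hpa
  rw [map_natCast, RingEquiv.apply_symm_apply] at hEp
  exact congrFun hEp i

theorem exists_isUnit_χ₈_eq (s : ZMod 2) :
    ∃ b : ZMod 8, IsUnit b ∧ b.val % 4 = 1 ∧ ZMod.χ₈ b = (-1) ^ s.val := by
  fin_cases s
  · exact ⟨1, isUnit_one, rfl, by decide⟩
  · exact ⟨5, by decide, rfl, by decide⟩

theorem exists_isUnit_quadraticChar_eq (q : ℕ) [Fact q.Prime] (hq : q ≠ 2) (s : ZMod 2) :
    ∃ b : ZMod q, IsUnit b ∧ quadraticChar (ZMod q) b = (-1) ^ s.val := by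
  obtain ⟨b, hb⟩ : ∃ b : ZMod q, quadraticChar (ZMod q) b = (-1) ^ s.val := by
    fin_cases s
    · exact ⟨1, by rw [map_one]; rfl⟩
    · exact quadraticChar_exists_neg_one (by rwa [ZMod.ringChar_zmod_n])
  refine ⟨b, isUnit_iff_ne_zero.2 fun h0 => ?_, hb⟩
  rw [h0, quadraticChar_zero] at hb
  exact absurd hb.symm (pow_ne_zero _ (by norm_num))

theorem infinite_setOf_legendreSym_eq_neg_one_pow (P : Finset ℕ) (hP : ∀ q ∈ P, q.Prime)
    (ε : ℕ → ZMod 2) :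
    {p : ℕ | ∃ hp : Fact p.Prime, p ≠ 2 ∧
      ∀ q ∈ P, @legendreSym p hp q = (-1) ^ (ε q).val}.Infinite := by
  let Q := {q // q ∈ P.erase 2}
  have hQ (q : Q) : (q : ℕ).Prime := hP q (Finset.mem_of_mem_erase q.2)
  have hQ2 (q : Q) : (q : ℕ) ≠ 2 := Finset.ne_of_mem_erase q.2
  have _ (q : Q) : Fact (q : ℕ).Prime := ⟨hQ q⟩
  -- `p mod 8` fixes `χ_p(2)` and forces `p ≡ 1 mod 4`; by reciprocity `p mod q` then fixes `χ_p(q)`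
  let m : Option Q → ℕ := fun i => i.elim 8 Subtype.val
  have _ (i : Option Q) : NeZero (m i) := by
    cases i with
    | none => exact ⟨by norm_num [m]⟩
    | some q => exact ⟨(hQ q).ne_zero⟩
  have hm : Pairwise (Function.onFun Nat.Coprime m) := by
    have h8 (q : Q) : Nat.Coprime 8 q :=
      Nat.Coprime.pow_left 3 ((Nat.coprime_primes Nat.prime_two (hQ q)).2 (hQ2 q).symm)
    rintro (_ | q) (_ | q') hqq'
    · exact absurd rfl hqq'
    · exact h8 q'
    · exact (h8 q).symm
    · exact (Nat.coprime_primes (hQ q) (hQ q')).2 fun h => hqq' (congrArg some (Subtype.ext h))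
  obtain ⟨b₈, hb₈, hb₈4, hχ₈⟩ := exists_isUnit_χ₈_eq (ε 2)
  choose b hb hχ using fun q : Q => exists_isUnit_quadraticChar_eq q (hQ2 q) (ε q)
  let a : ∀ i, ZMod (m i) := fun i => match i with
    | none => b₈
    | some q => b q
  have ha (i : Option Q) : IsUnit (a i) := by
    cases i with
    | none => exact hb₈
    | some q => exact hb q
  refine (Nat.infinite_setOf_prime_and_forall_eq_mod hm ha).mono ?_
  rintro p ⟨hp, hpa⟩
  have hp8 : p % 8 = b₈.val := by rw [← ZMod.val_natCast]; exact congrArg ZMod.val (hpa none)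
  have hp4 : p % 4 = 1 := by omega
  have hp2 : p ≠ 2 := by omega
  have _ : Fact p.Prime := ⟨hp⟩
  refine ⟨‹_›, hp2, fun q hq => ?_⟩
  by_cases hq2 : q = 2
  · subst hq2
    rw [Nat.cast_ofNat, legendreSym.at_two hp2, ← hχ₈]
    exact congrArg _ (hpa none)
  · have hqQ : q ∈ P.erase 2 := Finset.mem_erase.2 ⟨hq2, hq⟩
    have _ : Fact q.Prime := ⟨hP q hq⟩
    rw [← legendreSym.quadratic_reciprocity_one_mod_four hp4 hq2, ← hχ ⟨q, hqQ⟩, legendreSym,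
      Int.cast_natCast]
    exact congrArg _ (hpa (some ⟨q, hqQ⟩))

theorem infinite_setOf_forall_legendreSym_eq_neg_one_iff_general (S : Finset ℕ) :
    {p : ℕ | ∃ hp : Fact p.Prime, p ≠ 2 ∧ ∀ z ∈ S, @legendreSym p hp (z : ℤ) = -1}.Infinite ↔
      ∀ T ⊆ S, Odd T.card → ¬ IsSquare (∏ z ∈ T, z) := by
  constructor
  · rintro hinf T hT hodd
    obtain ⟨p, hp, -, hχ⟩ := hinf.nonempty
    exact not_isSquare_prod_of_legendreSym_eq_neg_one p hodd fun z hz => hχ z (hT hz)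
  · intro hS
    have hS0 : ∀ z ∈ S, z ≠ 0 := fun z hz h0 =>
      hS {z} (Finset.singleton_subset_iff.2 hz) (by simp) (by simp [h0])
    obtain ⟨f, hf⟩ := exists_dual_forall_apply_eq_one S Nat.factorizationMod2 fun T hT hodd h0 =>
      have hT0 : ∀ z ∈ T, z ≠ 0 := fun z hz => hS0 z (hT hz)
      hS T hT hodd <| Nat.isSquare_of_factorizationMod2_eq_zero (Finset.prod_ne_zero_iff.2 hT0)
        (by rwa [Nat.factorizationMod2_prod hT0])
    have hP : ∀ q ∈ S.biUnion Nat.primeFactors, q.Prime := fun q hq =>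
      have ⟨_, _, hqz⟩ := Finset.mem_biUnion.1 hq
      Nat.prime_of_mem_primeFactors hqz
    refine (infinite_setOf_legendreSym_eq_neg_one_pow _ hP fun q => f (Finsupp.single q 1)).mono ?_
    rintro p ⟨hp, hp2, hχ⟩
    refine ⟨hp, hp2, fun z hz => ?_⟩
    rw [legendreSym_natCast_eq_neg_one_pow p f (hS0 z hz)
      fun q hq => hχ q (Finset.mem_biUnion.2 ⟨z, hz, hq⟩), hf z hz]
    rfl

/-- A nonempty finite set `S` of positive integers is a set of quadratic non-residues of
infinitely many primes if and only if for every subset `T ⊆ S` of odd cardinality the product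
of the elements of `T` is not a perfect square. -/
theorem infinite_setOf_forall_legendreSym_eq_neg_one_iff (S : Finset ℕ) (hS : S.Nonempty)
    (hpos : ∀ z ∈ S, 0 < z) :
    {p : ℕ | ∃ hp : Fact p.Prime, p ≠ 2 ∧ ∀ z ∈ S, @legendreSym p hp (z : ℤ) = -1}.Infinite ↔
      ∀ T ⊆ S, Odd T.card → ¬ IsSquare (∏ z ∈ T, z) :=
  infinite_setOf_forall_legendreSym_eq_neg_one_iff_general S
end
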